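/- Fix an integer n ≥ 1 and let X₁, X₂, … be i.i.d. uniform on [n] = {1,…,n}. Let A₁, …, A_v ⊆ [n] be pairwise disjoint nonempty subsets, and for nonempty J ⊆ [n] let T_J denote the least r ≥ 1 such that every element of J appears among X₁,…,X_r. Then E[min_{1≤j≤v} T_{A_j}] = n·Σ_{s=1}^{v} (−1)^{s+1} Σ_{1 ≤ j₁ < ⋯ < j_s ≤ v} H_{|A_{j₁}| + ⋯ + |A_{j_s}|}, where H_m = Σ_{j=1}^m 1/j. -/

import Mathlib

/-!
`E[min_j T_{A_j}] = Σ_{r ≥ 0} P(no A_j is covered by the first r draws)`, and the event depends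
only on a uniform word of length `r`, so its probability is a count divided by `n ^ r`.
Inclusion–exclusion over the indices turns it into `Σ_{K ≠ ∅} (-1)^{|K|+1} P(T_{B_K} > r)` with
`B_K = ⋃_{j ∈ K} A_j` (the constant terms cancel because `Σ_K (-1)^{|K|} = 0`), and a second
inclusion–exclusion over the missed letters gives, for `|B| = m`,
`P(T_B > r) = Σ_{k=1}^m (-1)^{k+1} C(m,k) (1 - k/n)^r`. Summing the geometric series,
`E[T_B] = n Σ_{k=1}^m (-1)^{k+1} C(m,k) / k = n H_m`, and disjointness gives
`|B_K| = Σ_{j ∈ K} |A_j|`.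
-/

open MeasureTheory Finset
open scoped ENNReal

/-- The first time `r ≥ 1` (as an element of `[0,∞]`, with value `∞` if there is no such time)
at which the condition `cond r ω` holds. -/
noncomputable def firstTime {Ω : Type*} (cond : ℕ → Ω → Prop) (ω : Ω) : ℝ≥0∞ :=
  sInf {x : ℝ≥0∞ | ∃ r : ℕ, x = (r : ℝ≥0∞) ∧ 1 ≤ r ∧ cond r ω}

/-- The `m`-th harmonic number `H_m = Σ_{j=1}^m 1/j`. -/
noncomputable def harmonicNumber (m : ℕ) : ℝ := ∑ j ∈ Finset.range m, 1 / ((j : ℝ) + 1)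

lemma iInf_firstTime {Ω ι : Type*} (cond : ι → ℕ → Ω → Prop) (ω : Ω) :
    ⨅ j, firstTime (cond j) ω = firstTime (fun r ω => ∃ j, cond j r ω) ω := by
  refine le_antisymm (le_sInf ?_) (le_iInf fun j => le_sInf ?_)
  · rintro _ ⟨r, rfl, hr, j, hj⟩
    exact (iInf_le _ j).trans (sInf_le ⟨r, rfl, hr, hj⟩)
  · rintro _ ⟨r, rfl, hr, hj⟩
    exact sInf_le ⟨r, rfl, hr, j, hj⟩

lemma firstTime_eq_tsum_indicator {Ω : Type*} {cond : ℕ → Ω → Prop} {ω : Ω}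
    (hmono : Monotone (cond · ω)) (h0 : ¬ cond 0 ω) :
    firstTime cond ω = ∑' r, {ω | ¬ cond r ω}.indicator 1 ω := by
  have hencard : ∑' r, {ω | ¬ cond r ω}.indicator (1 : Ω → ℝ≥0∞) ω = {r | ¬ cond r ω}.encard := by
    rw [← ENNReal.tsum_set_one]
    exact (_root_.tsum_subtype {r | ¬ cond r ω} 1).symm
  rw [hencard]
  by_cases hex : ∃ r, cond r ω
  · classical
    have hIio : {r | ¬ cond r ω} = Set.Iio (Nat.find hex) := by
      ext r
      exact ⟨fun h => not_le.1 fun hle => h (hmono hle (Nat.find_spec hex)), Nat.find_min hex⟩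
    have hpos : 1 ≤ Nat.find hex := Nat.one_le_iff_ne_zero.2 fun h => h0 (h ▸ Nat.find_spec hex)
    rw [hIio, ← Finset.coe_range, Set.encard_coe_eq_coe_finsetCard, Finset.card_range]
    refine le_antisymm (sInf_le ⟨_, rfl, hpos, Nat.find_spec hex⟩) (le_sInf ?_)
    rintro _ ⟨r, rfl, -, hr⟩
    exact_mod_cast Nat.find_min' hex hr
  · have huniv : {r | ¬ cond r ω} = Set.univ := Set.eq_univ_of_forall (not_exists.1 hex)
    have hempty : {x : ℝ≥0∞ | ∃ r : ℕ, x = r ∧ 1 ≤ r ∧ cond r ω} = ∅ :=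
      Set.eq_empty_of_forall_notMem fun _ ⟨r, _, _, hr⟩ => hex ⟨r, hr⟩
    rw [huniv, Set.encard_eq_top_iff.2 Set.infinite_univ, firstTime, hempty, sInf_empty]
    rfl

theorem lintegral_firstTime {Ω : Type*} [MeasurableSpace Ω] (μ : Measure Ω)
    {cond : ℕ → Ω → Prop} (hmeas : ∀ r, MeasurableSet {ω | cond r ω})
    (hmono : ∀ ω, Monotone (cond · ω)) (h0 : ∀ ω, ¬ cond 0 ω) :
    ∫⁻ ω, firstTime cond ω ∂μ = ∑' r, μ {ω | ¬ cond r ω} := by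
  have hmeas' : ∀ r, MeasurableSet {ω | ¬ cond r ω} := fun r => (hmeas r).compl
  simp_rw [firstTime_eq_tsum_indicator (hmono _) (h0 _)]
  rw [lintegral_tsum fun r => (measurable_one.indicator (hmeas' r)).aemeasurable]
  exact tsum_congr fun r => lintegral_indicator_one (hmeas' r)

lemma measurableSet_prefix {α : Type*} [MeasurableSpace α] [MeasurableSingletonClass α]
    [Finite α] (r : ℕ) (P : (Fin r → α) → Prop) :
    MeasurableSet {ω : ℕ → α | P fun s : Fin r => ω s} :=
  (by fun_prop : Measurable fun (ω : ℕ → α) (s : Fin r) => ω s) (Set.toFinite _).measurableSet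

lemma measure_prefix {α : Type*} [Fintype α] [MeasurableSpace α] [MeasurableSingletonClass α]
    {μ : Measure (ℕ → α)} {c : ℝ≥0∞}
    (hμ : ∀ (m : ℕ) (a : Fin m → α), μ {ω | ∀ i : Fin m, ω i = a i} = c ^ m)
    (r : ℕ) (P : (Fin r → α) → Prop) [DecidablePred P] :
    μ {ω | P fun s : Fin r => ω s} = #{f | P f} * c ^ r := by
  have hpre : Measurable fun (ω : ℕ → α) (s : Fin r) => ω s := by fun_prop
  have hcyl : ∀ f : Fin r → α, μ ((fun (ω : ℕ → α) (s : Fin r) => ω s) ⁻¹' {f}) = c ^ r := by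
    intro f
    rw [← hμ r f]
    congr 1
    ext ω
    simp [funext_iff]
  have hset : {ω : ℕ → α | P fun s : Fin r => ω s} =
      (fun (ω : ℕ → α) (s : Fin r) => ω s) ⁻¹' ↑({f | P f} : Finset _) := by
    ext ω
    simp
  rw [hset, ← Measure.map_apply hpre (Finset.finite_toSet _).measurableSet, ← sum_measure_singleton]
  simp [Measure.map_apply hpre (measurableSet_singleton _), hcyl]

theorem lintegral_iInf_firstTime_covers {α ι : Type*} [MeasurableSpace α]
    [MeasurableSingletonClass α] [Finite α] (μ : Measure (ℕ → α)) (A : ι → Finset α)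
    (hA : ∀ j, (A j).Nonempty) :
    ∫⁻ ω, ⨅ j, firstTime (fun r ω => ∀ i ∈ A j, ∃ s : Fin r, ω s = i) ω ∂μ =
      ∑' r, μ {ω | ¬ ∃ j, ∀ i ∈ A j, ∃ s : Fin r, ω s = i} := by
  simp_rw [iInf_firstTime]
  refine lintegral_firstTime μ
    (fun r => measurableSet_prefix r fun f => ∃ j, ∀ i ∈ A j, ∃ s, f s = i) ?_ ?_
  · rintro ω r r' hrr' ⟨j, hj⟩
    refine ⟨j, fun i hi => ?_⟩
    obtain ⟨s, hs⟩ := hj i hi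
    exact ⟨Fin.castLE hrr' s, hs⟩
  · rintro ω ⟨j, hj⟩
    obtain ⟨i, hi⟩ := hA j
    obtain ⟨s, -⟩ := hj i hi
    exact s.elim0

lemma sum_range_neg_one_pow_mul_choose_succ {m : ℕ} (hm : m ≠ 0) :
    ∑ k ∈ range m, (-1 : ℝ) ^ k * m.choose (k + 1) = 1 := by
  have h := congrArg (Int.cast : ℤ → ℝ) (Int.alternating_sum_range_choose_of_ne hm)
  push_cast at h
  rw [sum_range_succ'] at h
  simp only [pow_succ, mul_neg_one, neg_mul, sum_neg_distrib, pow_zero, Nat.choose_zero_right,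
    Nat.cast_one, one_mul] at h
  linarith

lemma harmonicNumber_eq_sum_range_choose (m : ℕ) :
    harmonicNumber m = ∑ k ∈ range m, (-1) ^ k * m.choose (k + 1) / (k + 1 : ℝ) := by
  induction m with
  | zero => simp [harmonicNumber]
  | succ m ih =>
    have hshift : ∀ k : ℕ, (m.choose k : ℝ) / (k + 1) = (m + 1).choose (k + 1) / (m + 1) := by
      intro k
      rw [div_eq_div_iff (by positivity) (by positivity), mul_comm]
      exact_mod_cast Nat.add_one_mul_choose_eq m k
    calc harmonicNumber (m + 1) = harmonicNumber m + 1 / (m + 1) := by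
          simp [harmonicNumber, sum_range_succ]
      _ = ∑ k ∈ range (m + 1), (-1) ^ k * m.choose (k + 1) / (k + 1 : ℝ) +
            ∑ k ∈ range (m + 1), (-1) ^ k * ((m + 1).choose (k + 1) / (m + 1 : ℝ)) := by
          rw [ih, sum_range_succ _ m, Nat.choose_succ_self]
          simp_rw [← mul_div_assoc]
          rw [← sum_div, sum_range_neg_one_pow_mul_choose_succ m.succ_ne_zero]
          simp
      _ = ∑ k ∈ range (m + 1), (-1) ^ k * (m + 1).choose (k + 1) / (k + 1 : ℝ) := by
          simp_rw [← hshift, ← sum_add_distrib, Nat.choose_succ_succ']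
          push_cast
          exact sum_congr rfl fun k _ => by ring

/-- `P(T_B > r)` for a set `B` of `m` of the `n` letters, by inclusion–exclusion over the
letters of `B` that are missed. -/
noncomputable def uncoveredProb (n m r : ℕ) : ℝ :=
  ∑ k ∈ range m, (-1) ^ k * m.choose (k + 1) * (1 - (k + 1) / n) ^ r

lemma hasSum_uncoveredProb {n m : ℕ} (h : m ≤ n) :
    HasSum (uncoveredProb n m) (n * harmonicNumber m) := by
  rw [harmonicNumber_eq_sum_range_choose, mul_sum]
  refine hasSum_sum fun k hk => ?_
  have hkn : (k + 1 : ℝ) ≤ n := by exact_mod_cast (mem_range.1 hk).trans_le h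
  have hn : (0 : ℝ) < n := by linarith
  have hq₀ : 0 ≤ 1 - (k + 1) / (n : ℝ) := sub_nonneg.2 ((div_le_one hn).2 hkn)
  have hq₁ : 1 - (k + 1) / (n : ℝ) < 1 := sub_lt_self _ (by positivity)
  have hvalue : (n : ℝ) * ((-1) ^ k * m.choose (k + 1) / (k + 1)) =
      (-1) ^ k * m.choose (k + 1) * (1 - (1 - (k + 1) / (n : ℝ)))⁻¹ := by
    rw [sub_sub_cancel, inv_div]
    ring
  rw [hvalue]
  exact (hasSum_geometric_of_lt_one hq₀ hq₁).mul_left _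

section Words

variable {α β : Type*} [Fintype α] [Fintype β] [DecidableEq α] [DecidableEq β]

lemma card_filter_forall_forall_ne (S : Finset α) :
    #{f : β → α | ∀ i ∈ S, ∀ s, f s ≠ i} = (Fintype.card α - #S) ^ Fintype.card β := by
  have h : ({f : β → α | ∀ i ∈ S, ∀ s, f s ≠ i} : Finset _) = Fintype.piFinset fun _ => Sᶜ := by
    ext f
    simp only [mem_filter, mem_univ, true_and, Fintype.mem_piFinset, mem_compl]
    exact ⟨fun h s hs => h _ hs s rfl, fun h i hi s hs => h s (hs ▸ hi)⟩
  simp [h, card_compl]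

lemma card_filter_forall_exists_eq (B : Finset α) :
    (#{f : β → α | ∀ i ∈ B, ∃ s, f s = i} : ℤ) =
      ∑ S ∈ B.powerset, (-1 : ℤ) ^ #S * ((Fintype.card α - #S) ^ Fintype.card β : ℕ) := by
  have h := inclusion_exclusion_card_inf_compl B fun i => ({f : β → α | ∀ s, f s ≠ i} : Finset _)
  convert h using 3 with S
  · ext f
    simp [mem_inf]
  · rw [← card_filter_forall_forall_ne]
    congr 2
    ext f
    simp [mem_inf]

lemma card_filter_not_forall_exists_eq_div (B : Finset α) :
    (#{f : β → α | ¬ ∀ i ∈ B, ∃ s, f s = i} : ℝ) / Fintype.card α ^ Fintype.card β =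
      uncoveredProb (Fintype.card α) #B (Fintype.card β) := by
  set n := Fintype.card α
  set r := Fintype.card β
  have hBn : #B ≤ n := card_le_univ B
  have hcov : (#{f : β → α | ∀ i ∈ B, ∃ s, f s = i} : ℝ) =
      ∑ k ∈ range (#B + 1), (-1) ^ k * (#B).choose k * ((n : ℝ) - k) ^ r := by
    have h := congrArg (Int.cast : ℤ → ℝ) (card_filter_forall_exists_eq (β := β) B)
    push_cast at h
    rw [h, sum_powerset_apply_card fun k => (-1 : ℝ) ^ k * ((n - k : ℕ) : ℝ) ^ r]
    refine sum_congr rfl fun k hk => ?_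
    rw [nsmul_eq_mul, Nat.cast_sub ((Nat.lt_succ_iff.1 (mem_range.1 hk)).trans hBn)]
    ring
  have htotal : (#{f : β → α | ∀ i ∈ B, ∃ s, f s = i} : ℝ) +
      #{f : β → α | ¬ ∀ i ∈ B, ∃ s, f s = i} = (n : ℝ) ^ r := by
    exact_mod_cast (card_filter_add_card_filter_not _).trans Fintype.card_fun
  rw [← sub_eq_of_eq_add' htotal.symm, hcov, sum_range_succ']
  simp only [pow_zero, Nat.choose_zero_right, Nat.cast_one, Nat.cast_zero, sub_zero, one_mul,
    sub_add_cancel_right, neg_div, sum_div, ← sum_neg_distrib, uncoveredProb]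
  refine sum_congr rfl fun k hk => ?_
  have hn : (n : ℝ) ≠ 0 := Nat.cast_ne_zero.2 (Nat.ne_zero_of_lt ((mem_range.1 hk).trans_le hBn))
  rw [mul_div_assoc, ← div_pow, sub_div, div_self hn]
  push_cast
  ring

lemma card_filter_not_exists_forall_exists_eq {ι : Type*} [Fintype ι] [Nonempty ι]
    (A : ι → Finset α) :
    (#{f : β → α | ¬ ∃ j, ∀ i ∈ A j, ∃ s, f s = i} : ℤ) =
      ∑ K ∈ univ.powerset,
        (-1 : ℤ) ^ (#K + 1) * #{f : β → α | ¬ ∀ i ∈ K.biUnion A, ∃ s, f s = i} := by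
  have h := inclusion_exclusion_card_inf_compl univ
    fun j => ({f : β → α | ∀ i ∈ A j, ∃ s, f s = i} : Finset _)
  have hinf : ∀ K : Finset ι, (K.inf fun j => ({f : β → α | ∀ i ∈ A j, ∃ s, f s = i} : Finset _)) =
      ({f : β → α | ∀ i ∈ K.biUnion A, ∃ s, f s = i} : Finset _) := by
    intro K
    ext f
    simp only [mem_inf, mem_filter, mem_univ, true_and, mem_biUnion, forall_exists_index, and_imp]
    exact ⟨fun h i j hj hi => h j hj i hi, fun h j hj i hi => h i j hj hi⟩
  have hcompl : ∀ B : Finset α, (#{f : β → α | ∀ i ∈ B, ∃ s, f s = i} : ℤ) =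
      Fintype.card (β → α) - #{f : β → α | ¬ ∀ i ∈ B, ∃ s, f s = i} := by
    intro B
    rw [eq_sub_iff_add_eq]
    exact_mod_cast card_filter_add_card_filter_not _
  simp only [hinf, hcompl, mul_sub, sum_sub_distrib, ← sum_mul] at h
  have hnone : (univ.inf fun j => ({f : β → α | ∀ i ∈ A j, ∃ s, f s = i} : Finset _)ᶜ) =
      ({f : β → α | ¬ ∃ j, ∀ i ∈ A j, ∃ s, f s = i} : Finset _) := by
    ext f
    simp only [mem_inf, mem_compl, mem_filter, mem_univ, true_and, forall_const, not_exists]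
  rw [hnone, sum_powerset_neg_one_pow_card_of_nonempty univ_nonempty, zero_mul, zero_sub,
    ← sum_neg_distrib] at h
  rw [h]
  exact sum_congr rfl fun K _ => by ring

lemma card_filter_not_exists_forall_exists_eq_div {ι : Type*} [Fintype ι] [Nonempty ι]
    (A : ι → Finset α) :
    (#{f : β → α | ¬ ∃ j, ∀ i ∈ A j, ∃ s, f s = i} : ℝ) / Fintype.card α ^ Fintype.card β =
      ∑ K ∈ univ.powerset,
        (-1) ^ (#K + 1) * uncoveredProb (Fintype.card α) #(K.biUnion A) (Fintype.card β) := by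
  have h := congrArg (Int.cast : ℤ → ℝ) (card_filter_not_exists_forall_exists_eq (β := β) A)
  push_cast at h
  simp_rw [h, sum_div, mul_div_assoc, card_filter_not_forall_exists_eq_div]

end Words

theorem hasSum_card_filter_not_exists_div {α ι : Type*} [Fintype α] [DecidableEq α] [Fintype ι]
    [Nonempty ι] (A : ι → Finset α) :
    HasSum (fun r => (#{f : Fin r → α | ¬ ∃ j, ∀ i ∈ A j, ∃ s, f s = i} : ℝ) / Fintype.card α ^ r)
      (∑ K ∈ univ.powerset,
        (-1) ^ (#K + 1) * (Fintype.card α * harmonicNumber #(K.biUnion A))) := by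
  refine (hasSum_sum fun K _ =>
    (hasSum_uncoveredProb (card_le_univ (K.biUnion A))).mul_left _).congr_fun fun r => ?_
  simpa using card_filter_not_exists_forall_exists_eq_div (β := Fin r) A

lemma sum_powerset_univ_eq_sum_Icc_sum_powersetCard {ι M : Type*} [Fintype ι] [AddCommMonoid M]
    (f : Finset ι → M) (hf : f ∅ = 0) :
    ∑ K ∈ univ.powerset, f K = ∑ s ∈ Icc 1 (Fintype.card ι), ∑ J ∈ powersetCard s univ, f J := by
  rw [sum_powerset, card_univ, sum_range_succ', powersetCard_zero, sum_singleton, hf, add_zero,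
    ← Finset.Ico_add_one_right_eq_Icc, sum_Ico_eq_sum_range]
  simp only [Nat.add_sub_cancel, add_comm 1]

/-- Let `X₁, X₂, …` be i.i.d. uniform on `[n]` (the coordinate process on `[n]^ℕ` under the
infinite uniform product measure `μ`, characterized by its values on cylinder sets).  Let
`A₁, …, A_v ⊆ [n]` be pairwise disjoint nonempty subsets, and `T_J` the cover time of a
nonempty set `J`.  Then, by inclusion-exclusion,
`E[min_j T_{A_j}] = n·Σ_{s=1}^{v} (−1)^{s+1} Σ_{j₁<⋯<j_s} H_{|A_{j₁}|+⋯+|A_{j_s}|}`. -/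
theorem expected_retrieval_time_disjoint_sets (n : ℕ) (hn : 1 ≤ n)
    (μ : Measure (ℕ → Fin n))
    (hμ : ∀ (m : ℕ) (a : Fin m → Fin n),
      μ {ω : ℕ → Fin n | ∀ i : Fin m, ω (i : ℕ) = a i} = ∏ _i : Fin m, ((n : ℝ≥0∞))⁻¹)
    (v : ℕ) (hv : 1 ≤ v) (A : Fin v → Finset (Fin n)) (hA : ∀ j, (A j).Nonempty)
    (hdisj : ∀ j j' : Fin v, j ≠ j' → Disjoint (A j) (A j')) :
    ∫⁻ ω, ⨅ j : Fin v, firstTime (fun r ω => ∀ i ∈ A j, ∃ s : Fin r, ω (s : ℕ) = i) ω ∂μ =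
      ENNReal.ofReal ((n : ℝ) *
        ∑ s ∈ Finset.Icc 1 v, (-1 : ℝ) ^ (s + 1) *
          ∑ J ∈ Finset.powersetCard s (Finset.univ : Finset (Fin v)),
            harmonicNumber (∑ j ∈ J, (A j).card)) := by
  have : Nonempty (Fin v) := ⟨⟨0, hv⟩⟩
  have hcyl : ∀ (m : ℕ) (a : Fin m → Fin n),
      μ {ω : ℕ → Fin n | ∀ i : Fin m, ω i = a i} = (n : ℝ≥0∞)⁻¹ ^ m := by
    simpa using hμ
  have hp : HasSum (fun r => (#{f : Fin r → Fin n | ¬ ∃ j, ∀ i ∈ A j, ∃ s, f s = i} : ℝ) / n ^ r)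
      (∑ K ∈ univ.powerset, (-1) ^ (#K + 1) * (n * harmonicNumber #(K.biUnion A))) := by
    convert hasSum_card_filter_not_exists_div A <;> simp
  have hμp : ∀ r, μ {ω | ¬ ∃ j, ∀ i ∈ A j, ∃ s : Fin r, ω s = i} =
      ENNReal.ofReal (#{f : Fin r → Fin n | ¬ ∃ j, ∀ i ∈ A j, ∃ s, f s = i} / n ^ r) := by
    intro r
    rw [measure_prefix hcyl r fun f => ¬ ∃ j, ∀ i ∈ A j, ∃ s, f s = i,
      ENNReal.ofReal_div_of_pos (by positivity), ENNReal.ofReal_natCast, ENNReal.ofReal_pow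
      (Nat.cast_nonneg n), ENNReal.ofReal_natCast, div_eq_mul_inv, ENNReal.inv_pow]
  rw [lintegral_iInf_firstTime_covers μ A hA, tsum_congr hμp,
    ← ENNReal.ofReal_tsum_of_nonneg (fun r => by positivity) hp.summable, hp.tsum_eq,
    sum_powerset_univ_eq_sum_Icc_sum_powersetCard _ (by simp [harmonicNumber]), mul_sum,
    Fintype.card_fin]
  congr 1
  refine sum_congr rfl fun s _ => ?_
  rw [mul_sum, mul_sum]
  refine sum_congr rfl fun J hJ => ?_
  rw [(mem_powersetCard.1 hJ).2, card_biUnion fun j _ j' _ hjj' => hdisj j j' hjj']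
  ring
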